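/- arXiv:2102.09157 — 2 statements merged into one kernel-verified Lean document; each statement's English description precedes it below -/
import Mathlib

section
/- (Maximum principle for the transport equation) Let ψ be a C¹ solution on [0,T] × [x_L,x_R] × [−1,1] of ∂_t ψ + μ∂_x ψ + σ_t ψ = σ_s (1/2)∫_{-1}^1 ψ dμ' with constants σ_t ≥ σ_s ≥ 0, nonnegative initial data, and nonnegative inflow boundary data bounded by M, with initial data also bounded by M. Then 0 ≤ ψ(t,x,μ) ≤ M for all (t,x,μ) in the domain. -/
open MeasureTheory Real Set Filter Topology

lemma slope_max_right {f : ℝ → ℝ} {a b d : ℝ} (hab : a < b)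
    (hd : HasDerivAt f d b) (hmax : ∀ x ∈ Set.Icc a b, f x ≤ f b) : 0 ≤ d := by
  have h := (hd.hasDerivWithinAt (s := Set.Ioo a b))
  rw [hasDerivWithinAt_iff_tendsto_slope] at h
  rw [diff_singleton_eq_self (by simp)] at h
  have hne : (𝓝[Set.Ioo a b] b).NeBot :=
    mem_closure_iff_nhdsWithin_neBot.mp
      (by rw [closure_Ioo hab.ne]; exact right_mem_Icc.mpr hab.le)
  refine ge_of_tendsto h ?_
  filter_upwards [self_mem_nhdsWithin] with x hx
  have h1 : f x - f b ≤ 0 := sub_nonpos.mpr (hmax x ⟨hx.1.le, hx.2.le⟩)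
  have h2 : x - b ≤ 0 := sub_nonpos.mpr hx.2.le
  rw [slope_def_field f b x]
  exact div_nonneg_of_nonpos h1 h2

lemma slope_max_left {f : ℝ → ℝ} {a b d : ℝ} (hab : a < b)
    (hd : HasDerivAt f d a) (hmax : ∀ x ∈ Set.Icc a b, f x ≤ f a) : d ≤ 0 := by
  have h := (hd.hasDerivWithinAt (s := Set.Ioo a b))
  rw [hasDerivWithinAt_iff_tendsto_slope] at h
  rw [diff_singleton_eq_self (by simp)] at h
  have hne : (𝓝[Set.Ioo a b] a).NeBot :=
    mem_closure_iff_nhdsWithin_neBot.mp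
      (by rw [closure_Ioo hab.ne]; exact left_mem_Icc.mpr hab.le)
  refine le_of_tendsto h ?_
  filter_upwards [self_mem_nhdsWithin] with x hx
  have h1 : f x - f a ≤ 0 := sub_nonpos.mpr (hmax x ⟨hx.1.le, hx.2.le⟩)
  have h2 : 0 ≤ x - a := sub_nonneg.mpr hx.1.le
  rw [slope_def_field f a x]
  exact div_nonpos_of_nonpos_of_nonneg h1 h2

lemma transport_upper_bound
    (T xL xR M σt σs : ℝ) (hT : 0 < T) (hx : xL < xR)
    (hσs : 0 ≤ σs) (hσst : σs ≤ σt) (hM : 0 ≤ M)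
    (ψ ψt ψx : ℝ → ℝ → ℝ → ℝ)
    (hcont : ContinuousOn (fun p : ℝ × ℝ × ℝ => ψ p.1 p.2.1 p.2.2)
      (Icc 0 T ×ˢ Icc xL xR ×ˢ Icc (-1) 1))
    (hψt : ∀ t ∈ Icc 0 T, ∀ x ∈ Icc xL xR, ∀ μ ∈ Icc (-1:ℝ) 1,
      HasDerivAt (fun s => ψ s x μ) (ψt t x μ) t)
    (hψx : ∀ t ∈ Icc 0 T, ∀ x ∈ Icc xL xR, ∀ μ ∈ Icc (-1:ℝ) 1,
      HasDerivAt (fun y => ψ t y μ) (ψx t x μ) x)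
    (hpde : ∀ t ∈ Icc 0 T, ∀ x ∈ Icc xL xR, ∀ μ ∈ Icc (-1:ℝ) 1,
      ψt t x μ + μ * ψx t x μ + σt * ψ t x μ
        = σs * ((1 / 2) * ∫ μ' in (-1:ℝ)..1, ψ t x μ'))
    (hic : ∀ x ∈ Icc xL xR, ∀ μ ∈ Icc (-1:ℝ) 1, ψ 0 x μ ≤ M)
    (hbcL : ∀ t ∈ Icc 0 T, ∀ μ ∈ Icc (-1:ℝ) 1, 0 < μ → ψ t xL μ ≤ M)
    (hbcR : ∀ t ∈ Icc 0 T, ∀ μ ∈ Icc (-1:ℝ) 1, μ < 0 → ψ t xR μ ≤ M) :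
    ∀ t ∈ Icc 0 T, ∀ x ∈ Icc xL xR, ∀ μ ∈ Icc (-1:ℝ) 1, ψ t x μ ≤ M := by
  -- Main claim with exponential barrier
  have key : ∀ ε > (0:ℝ), ∀ t ∈ Icc 0 T, ∀ x ∈ Icc xL xR, ∀ μ ∈ Icc (-1:ℝ) 1,
      ψ t x μ < M + ε * exp t := by
    intro ε hε
    by_contra hcon
    push_neg at hcon
    obtain ⟨t₀, ht₀, x₀, hx₀, μ₀, hμ₀, hge₀⟩ := hcon
    -- the "bad" compact set and first bad time
    set K : Set (ℝ × ℝ × ℝ) := Icc 0 T ×ˢ Icc xL xR ×ˢ Icc (-1) 1 with hK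
    have hKc : IsCompact K :=
      (isCompact_Icc).prod ((isCompact_Icc).prod isCompact_Icc)
    set C : Set (ℝ × ℝ × ℝ) :=
      K ∩ (fun p : ℝ × ℝ × ℝ => ψ p.1 p.2.1 p.2.2 - (M + ε * exp p.1)) ⁻¹' Ici 0 with hC
    have hbar : Continuous (fun p : ℝ × ℝ × ℝ => M + ε * Real.exp p.1) :=
      continuous_const.add (continuous_const.mul (Real.continuous_exp.comp continuous_fst))
    have hCclosed : IsClosed C :=
      ContinuousOn.preimage_isClosed_of_isClosed
        (hcont.sub hbar.continuousOn) hKc.isClosed isClosed_Ici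
    have hCc : IsCompact C := hKc.of_isClosed_subset hCclosed inter_subset_left
    have hSc : IsCompact (Prod.fst '' C) := hCc.image continuous_fst
    have hSne : (Prod.fst '' C).Nonempty :=
      ⟨t₀, ⟨(t₀, x₀, μ₀), ⟨⟨ht₀, hx₀, hμ₀⟩, by simpa using sub_nonneg.mpr hge₀⟩, rfl⟩⟩
    obtain ⟨⟨t₁', x₁, μ₁⟩, ⟨⟨ht₁K, hx₁, hμ₁⟩, hge'⟩, ht₁eq⟩ := hSc.sInf_mem hSne
    simp only [mem_preimage, mem_Ici] at hge'
    simp only at ht₁K hx₁ hμ₁ ht₁eq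
    have hge : M + ε * exp t₁' ≤ ψ t₁' x₁ μ₁ := by linarith
    -- before t₁' everything is strictly below the barrier
    have hA : ∀ τ ∈ Icc (0:ℝ) T, τ < t₁' → ∀ y ∈ Icc xL xR, ∀ ν ∈ Icc (-1:ℝ) 1,
        ψ τ y ν < M + ε * exp τ := by
      intro τ hτ hlt y hy ν hν
      by_contra hge2
      push_neg at hge2
      have : τ ∈ Prod.fst '' C :=
        ⟨(τ, y, ν), ⟨⟨hτ, hy, hν⟩, by simpa using sub_nonneg.mpr hge2⟩, rfl⟩
      have := csInf_le hSc.bddBelow this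
      rw [← ht₁eq] at this
      exact absurd this (not_le.mpr hlt)
    -- t₁' > 0
    have ht₁pos : 0 < t₁' := by
      rcases ht₁K.1.lt_or_eq with h | h
      · exact h
      · exfalso
        subst h
        have h0 := hic x₁ hx₁ μ₁ hμ₁
        nlinarith [exp_pos (0:ℝ)]
    -- at t₁' everything is ≤ the barrier (by continuity from the left)
    have hB : ∀ y ∈ Icc xL xR, ∀ ν ∈ Icc (-1:ℝ) 1, ψ t₁' y ν ≤ M + ε * exp t₁' := by
      intro y hy ν hν
      have hcont1 : ContinuousAt (fun τ => ψ τ y ν - (M + ε * exp τ)) t₁' :=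
        ((hψt t₁' ht₁K y hy ν hν).continuousAt).sub (by fun_prop)
      have hne : (𝓝[Set.Ioo 0 t₁'] t₁').NeBot :=
        mem_closure_iff_nhdsWithin_neBot.mp
          (by rw [closure_Ioo ht₁pos.ne]; exact right_mem_Icc.mpr ht₁pos.le)
      have hlim : Tendsto (fun τ => ψ τ y ν - (M + ε * exp τ)) (𝓝[Set.Ioo 0 t₁'] t₁')
          (𝓝 (ψ t₁' y ν - (M + ε * exp t₁'))) :=
        hcont1.continuousWithinAt.tendsto
      have : ψ t₁' y ν - (M + ε * exp t₁') ≤ 0 := by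
        refine le_of_tendsto hlim ?_
        filter_upwards [self_mem_nhdsWithin] with τ hτ
        have hτT : τ ∈ Icc (0:ℝ) T := ⟨hτ.1.le, le_trans hτ.2.le ht₁K.2⟩
        exact sub_nonpos.mpr (hA τ hτT hτ.2 y hy ν hν).le
      linarith
    have heq : ψ t₁' x₁ μ₁ = M + ε * exp t₁' := le_antisymm (hB x₁ hx₁ μ₁ hμ₁) hge
    -- time derivative lower bound
    have hdt : ε * exp t₁' ≤ ψt t₁' x₁ μ₁ := by
      have hD : HasDerivAt (fun τ => ψ τ x₁ μ₁ - (M + ε * exp τ))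
          (ψt t₁' x₁ μ₁ - ε * exp t₁') t₁' :=
        (hψt t₁' ht₁K x₁ hx₁ μ₁ hμ₁).sub
          (((Real.hasDerivAt_exp t₁').const_mul ε).const_add M)
      have hmax : ∀ τ ∈ Icc (0:ℝ) t₁', ψ τ x₁ μ₁ - (M + ε * exp τ)
          ≤ ψ t₁' x₁ μ₁ - (M + ε * exp t₁') := by
        intro τ hτ
        rcases hτ.2.lt_or_eq with h | h
        · have := hA τ ⟨hτ.1, le_trans hτ.2 ht₁K.2⟩ h x₁ hx₁ μ₁ hμ₁
          rw [heq]; linarith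
        · rw [h]
      have := slope_max_right ht₁pos hD hmax
      linarith
    -- integral bound
    have hIcont : ContinuousOn (fun ν => ψ t₁' x₁ ν) (Icc (-1:ℝ) 1) := by
      have : ContinuousOn ((fun p : ℝ × ℝ × ℝ => ψ p.1 p.2.1 p.2.2) ∘ (fun ν => (t₁', x₁, ν)))
          (Icc (-1:ℝ) 1) :=
        hcont.comp (Continuous.continuousOn (by fun_prop))
          (fun ν hν => ⟨ht₁K, hx₁, hν⟩)
      exact this
    have hIint : IntervalIntegrable (fun ν => ψ t₁' x₁ ν) volume (-1) 1 := by
      have h2 : ContinuousOn (fun ν => ψ t₁' x₁ ν) (uIcc (-1:ℝ) 1) := by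
        rw [uIcc_of_le (by norm_num : (-1:ℝ) ≤ 1)]; exact hIcont
      exact h2.intervalIntegrable
    have hIle : (∫ μ' in (-1:ℝ)..1, ψ t₁' x₁ μ') ≤ 2 * (M + ε * exp t₁') := by
      have h1 : (∫ μ' in (-1:ℝ)..1, ψ t₁' x₁ μ')
          ≤ ∫ _ in (-1:ℝ)..1, (M + ε * exp t₁') := by
        apply intervalIntegral.integral_mono_on (by norm_num) hIint
          intervalIntegrable_const
        intro ν hν
        exact hB x₁ hx₁ ν hν
      rw [intervalIntegral.integral_const] at h1
      have : ((1:ℝ) - (-1)) = 2 := by norm_num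
      rw [this] at h1
      simpa [smul_eq_mul] using h1
    -- pde at the point
    have hpde1 := hpde t₁' ht₁K x₁ hx₁ μ₁ hμ₁
    have hgpos : 0 ≤ M + ε * exp t₁' := by nlinarith [exp_pos t₁']
    have hsum : ψt t₁' x₁ μ₁ + μ₁ * ψx t₁' x₁ μ₁ ≤ 0 := by
      have h2 : σs * ((1/2) * ∫ μ' in (-1:ℝ)..1, ψ t₁' x₁ μ') ≤ σt * (M + ε * exp t₁') := by
        have : (1/2) * (∫ μ' in (-1:ℝ)..1, ψ t₁' x₁ μ') ≤ M + ε * exp t₁' := by linarith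
        calc σs * ((1/2) * ∫ μ' in (-1:ℝ)..1, ψ t₁' x₁ μ')
            ≤ σs * (M + ε * exp t₁') := by
              apply mul_le_mul_of_nonneg_left this hσs
          _ ≤ σt * (M + ε * exp t₁') := mul_le_mul_of_nonneg_right hσst hgpos
      rw [heq] at hpde1
      linarith
    have hμψx : μ₁ * ψx t₁' x₁ μ₁ < 0 := by
      have := exp_pos t₁'
      nlinarith
    -- spatial cases
    rcases lt_trichotomy μ₁ 0 with hμneg | hμzero | hμpos
    · -- μ₁ < 0 : if x₁ = xR inflow contradiction, else right-slope ≤ 0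
      rcases hx₁.2.lt_or_eq with hxlt | hxeq
      · have hle : ψx t₁' x₁ μ₁ ≤ 0 := by
          apply slope_max_left hxlt (hψx t₁' ht₁K x₁ hx₁ μ₁ hμ₁)
          intro y hy
          rw [heq]
          exact hB y ⟨le_trans hx₁.1 hy.1, hy.2⟩ μ₁ hμ₁
        nlinarith
      · have := hbcR t₁' ht₁K μ₁ hμ₁ hμneg
        rw [← hxeq] at this
        nlinarith [exp_pos t₁']
    · rw [hμzero] at hμψx; simp at hμψx
    · rcases hx₁.1.lt_or_eq with hxlt | hxeq
      · have hle : 0 ≤ ψx t₁' x₁ μ₁ := by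
          apply slope_max_right hxlt (hψx t₁' ht₁K x₁ hx₁ μ₁ hμ₁)
          intro y hy
          rw [heq]
          exact hB y ⟨hy.1, le_trans hy.2 hx₁.2⟩ μ₁ hμ₁
        nlinarith
      · have := hbcL t₁' ht₁K μ₁ hμ₁ hμpos
        rw [hxeq] at this
        nlinarith [exp_pos t₁']
  -- conclude by ε → 0
  intro t ht x hx' μ hμ
  refine le_of_forall_pos_le_add ?_
  intro ε hε
  have hεT : 0 < ε / exp T := div_pos hε (exp_pos T)
  have := key (ε / exp T) hεT t ht x hx' μ hμ
  have hexp : exp t ≤ exp T := exp_le_exp.mpr ht.2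
  have : ψ t x μ < M + (ε / exp T) * exp T := by
    apply lt_of_lt_of_le this
    have : (ε / exp T) * exp t ≤ (ε / exp T) * exp T :=
      mul_le_mul_of_nonneg_left hexp hεT.le
    linarith
  rw [div_mul_cancel₀ ε (exp_pos T).ne'] at this
  linarith



/-- Maximum principle for the slab-geometry transport equation:
a C¹ solution of `∂_t ψ + μ∂_x ψ + σ_t ψ = σ_s (1/2)∫_{-1}^1 ψ dμ'` with
`σ_t ≥ σ_s ≥ 0`, nonnegative initial data bounded by `M`, and nonnegative
inflow boundary data bounded by `M`, satisfies `0 ≤ ψ ≤ M` on the domain. -/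
theorem transport_maximum_principle
    (T xL xR M σt σs : ℝ) (hT : 0 < T) (hx : xL < xR)
    (hσs : 0 ≤ σs) (hσst : σs ≤ σt) (hM : 0 ≤ M)
    (ψ ψt ψx : ℝ → ℝ → ℝ → ℝ)
    (hcont : ContinuousOn (fun p : ℝ × ℝ × ℝ => ψ p.1 p.2.1 p.2.2)
      (Icc 0 T ×ˢ Icc xL xR ×ˢ Icc (-1) 1))
    (hψt : ∀ t ∈ Icc 0 T, ∀ x ∈ Icc xL xR, ∀ μ ∈ Icc (-1:ℝ) 1,
      HasDerivAt (fun s => ψ s x μ) (ψt t x μ) t)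
    (hψx : ∀ t ∈ Icc 0 T, ∀ x ∈ Icc xL xR, ∀ μ ∈ Icc (-1:ℝ) 1,
      HasDerivAt (fun y => ψ t y μ) (ψx t x μ) x)
    (hpde : ∀ t ∈ Icc 0 T, ∀ x ∈ Icc xL xR, ∀ μ ∈ Icc (-1:ℝ) 1,
      ψt t x μ + μ * ψx t x μ + σt * ψ t x μ
        = σs * ((1 / 2) * ∫ μ' in (-1:ℝ)..1, ψ t x μ'))
    (hic : ∀ x ∈ Icc xL xR, ∀ μ ∈ Icc (-1:ℝ) 1, 0 ≤ ψ 0 x μ ∧ ψ 0 x μ ≤ M)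
    (hbcL : ∀ t ∈ Icc 0 T, ∀ μ ∈ Icc (-1:ℝ) 1, 0 < μ → 0 ≤ ψ t xL μ ∧ ψ t xL μ ≤ M)
    (hbcR : ∀ t ∈ Icc 0 T, ∀ μ ∈ Icc (-1:ℝ) 1, μ < 0 → 0 ≤ ψ t xR μ ∧ ψ t xR μ ≤ M) :
    ∀ t ∈ Icc 0 T, ∀ x ∈ Icc xL xR, ∀ μ ∈ Icc (-1:ℝ) 1,
      0 ≤ ψ t x μ ∧ ψ t x μ ≤ M := by
  have hupper := transport_upper_bound T xL xR M σt σs hT hx hσs hσst hM ψ ψt ψx hcont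
    hψt hψx hpde
    (fun x hx' μ hμ => (hic x hx' μ hμ).2)
    (fun t ht μ hμ hμ0 => (hbcL t ht μ hμ hμ0).2)
    (fun t ht μ hμ hμ0 => (hbcR t ht μ hμ hμ0).2)
  have hlower := transport_upper_bound T xL xR 0 σt σs hT hx hσs hσst le_rfl
    (fun t x μ => -ψ t x μ) (fun t x μ => -ψt t x μ) (fun t x μ => -ψx t x μ)
    hcont.neg
    (fun t ht x hx' μ hμ => (hψt t ht x hx' μ hμ).neg)
    (fun t ht x hx' μ hμ => (hψx t ht x hx' μ hμ).neg)
    (fun t ht x hx' μ hμ => by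
      have h1 := hpde t ht x hx' μ hμ
      have h2 : (∫ μ' in (-1:ℝ)..1, -ψ t x μ') = -∫ μ' in (-1:ℝ)..1, ψ t x μ' :=
        intervalIntegral.integral_neg
      rw [h2]
      ring_nf
      ring_nf at h1
      linarith)
    (fun x hx' μ hμ => neg_nonpos.mpr (hic x hx' μ hμ).1)
    (fun t ht μ hμ hμ0 => neg_nonpos.mpr (hbcL t ht μ hμ hμ0).1)
    (fun t ht μ hμ hμ0 => neg_nonpos.mpr (hbcR t ht μ hμ hμ0).1)
  intro t ht x hx' μ hμ
  exact ⟨neg_nonpos.mp (hlower t ht x hx' μ hμ), hupper t ht x hx' μ hμ⟩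
end

section
/- (Uniqueness of C¹ solutions of the initial–inflow-boundary value problem) Let X ⊂ ℝ³ be a bounded C¹ domain. If ψ₁ and ψ₂ are C¹ solutions on [0,T] × X̄ × S² of ∂_t ψ + Ω·∇_x ψ = σ_s Sψ − σ_t ψ (with S the isotropic angular average, σ_s, σ_t ≥ 0 constants) with the same initial data and the same inflow boundary data on γ₋, then ψ₁ = ψ₂. -/
/-!
The difference `e = ψ₁ - ψ₂` solves the homogeneous problem with zero initial and inflow data.
Multiplying the equation by `2e` and integrating over `X × S²`, the streaming term becomes, by
Gauss–Green, the boundary flux `∫_∂X e² (Ω·n)`, which is nonnegative because `e = 0` wherever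
`Ω·n < 0`; the absorption term is nonpositive; and by Cauchy–Schwarz on each sphere the scattering
term is at most `σ_s |S²| / (2π) · ‖e‖²`. Grönwall then forces `‖e(t)‖²_{L²(X × S²)} = 0`, and since
the measure charges every neighbourhood of a point of `X × S²`, the continuous `e` vanishes there,
hence on `X̄ × S²`.
-/

open MeasureTheory Real Set
open scoped RealInnerProductSpace

abbrev EucV : Type := EuclideanSpace ℝ (Fin 3)

theorem ae_mem_prod_of_ae_mem {α β : Type*} [MeasurableSpace α] [MeasurableSpace β]
    {μ : Measure α} {ν : Measure β} {s : Set α} {t : Set β} (hs : ∀ᵐ a ∂μ, a ∈ s)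
    (ht : ∀ᵐ b ∂ν, b ∈ t) : ∀ᵐ p ∂μ.prod ν, p ∈ s ×ˢ t :=
  (Measure.quasiMeasurePreserving_fst.ae hs).and (Measure.quasiMeasurePreserving_snd.ae ht)

section FiniteMeasureOnCompact

variable {α : Type*} [TopologicalSpace α] [MeasurableSpace α] [OpensMeasurableSpace α]
  {μ : Measure α} [IsFiniteMeasure μ] {K : Set α}

theorem Continuous.integrable_of_ae_mem_isCompact {g : α → ℝ} (hg : Continuous g)
    (hK : IsCompact K) (hμK : ∀ᵐ a ∂μ, a ∈ K) : Integrable g μ := by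
  obtain ⟨C, hC⟩ := hK.exists_bound_of_continuousOn hg.continuousOn
  exact .of_bound hg.aestronglyMeasurable C (hμK.mono hC)

theorem continuous_integral_of_ae_mem_isCompact {β : Type*} [TopologicalSpace β]
    [FirstCountableTopology β] [LocallyCompactSpace β] {f : β → α → ℝ}
    (hf : Continuous fun q : β × α => f q.1 q.2) (hK : IsCompact K) (hμK : ∀ᵐ a ∂μ, a ∈ K) :
    Continuous fun b => ∫ a, f b a ∂μ := by
  rw [← Measure.restrict_eq_self_of_ae_mem hμK]
  exact continuous_parametric_integral_of_continuous hf hK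

theorem hasDerivAt_integral_of_continuous_of_ae_mem_isCompact {F F' : ℝ → α → ℝ}
    (hF : Continuous fun q : ℝ × α => F q.1 q.2) (hF' : Continuous fun q : ℝ × α => F' q.1 q.2)
    (hderiv : ∀ t a, HasDerivAt (F · a) (F' t a) t) (hK : IsCompact K)
    (hμK : ∀ᵐ a ∂μ, a ∈ K) (t₀ : ℝ) :
    HasDerivAt (fun t => ∫ a, F t a ∂μ) (∫ a, F' t₀ a ∂μ) t₀ := by
  obtain ⟨C, hC⟩ :=
    ((isCompact_closedBall t₀ 1).prod hK).exists_bound_of_continuousOn hF'.continuousOn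
  have hFt : ∀ t, Continuous (F t) := fun t => hF.comp (Continuous.prodMk_right t)
  refine (hasDerivAt_integral_of_dominated_loc_of_deriv_le (bound := fun _ => C)
    (Metric.closedBall_mem_nhds t₀ one_pos) (.of_forall fun t => (hFt t).aestronglyMeasurable)
    ((hFt t₀).integrable_of_ae_mem_isCompact hK hμK)
    (hF'.comp (Continuous.prodMk_right t₀)).aestronglyMeasurable ?_ (integrable_const C)
    (.of_forall fun a t _ => hderiv t a)).2
  filter_upwards [hμK] with a ha t ht using hC (t, a) ⟨ht, ha⟩

end FiniteMeasureOnCompact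

theorem sq_integral_le_measureReal_univ_mul_integral_sq {α : Type*} [MeasurableSpace α]
    {μ : Measure α} [IsFiniteMeasure μ] {f : α → ℝ} (hf : Integrable f μ)
    (hf2 : Integrable (fun a => f a ^ 2) μ) :
    (∫ a, f a ∂μ) ^ 2 ≤ μ.real univ * ∫ a, f a ^ 2 ∂μ := by
  have hquad : ∀ s : ℝ, 0 ≤ μ.real univ * (s * s) + 2 * (∫ a, f a ∂μ) * s + ∫ a, f a ^ 2 ∂μ := by
    intro s
    have hexpand : ∫ a, (s + f a) ^ 2 ∂μ
        = μ.real univ * (s * s) + 2 * (∫ a, f a ∂μ) * s + ∫ a, f a ^ 2 ∂μ := by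
      simp_rw [add_sq]
      rw [integral_add (f := fun a => s ^ 2 + 2 * s * f a)
          ((integrable_const _).add (hf.const_mul _)) hf2,
        integral_add (integrable_const _) (hf.const_mul _), integral_const, integral_const_mul]
      simp only [smul_eq_mul]
      ring
    exact hexpand ▸ integral_nonneg fun a => sq_nonneg _
  have hdisc := discrim_le_zero hquad
  rw [discrim] at hdisc
  nlinarith

theorem eq_zero_of_hasDerivAt_le_mul_of_nonneg {f f' : ℝ → ℝ} {K a b : ℝ}
    (hderiv : ∀ t ∈ Icc a b, HasDerivAt f (f' t) t) (hbound : ∀ t ∈ Ico a b, f' t ≤ K * f t)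
    (ha : f a = 0) (hnonneg : ∀ t ∈ Icc a b, 0 ≤ f t) : ∀ t ∈ Icc a b, f t = 0 := by
  intro t ht
  refine le_antisymm ?_ (hnonneg t ht)
  calc f t ≤ gronwallBound 0 K 0 (t - a) :=
        le_gronwallBound_of_liminf_deriv_right_le
          (fun s hs => (hderiv s hs).continuousAt.continuousWithinAt)
          (fun s hs _ hr =>
            (hderiv s (Ico_subset_Icc_self hs)).hasDerivWithinAt.liminf_right_slope_le hr)
          ha.le (by simpa using hbound) t ht
    _ = 0 := gronwallBound_ε0_δ0 K _

namespace MeasureTheory.Measure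

variable {α β : Type*} [TopologicalSpace α] [MeasurableSpace α] {μ : Measure α}

theorem apply_eq_of_ae_eq_of_mem_support {γ : Type*} [TopologicalSpace γ] [T2Space γ]
    {f g : α → γ} (hf : Continuous f) (hg : Continuous g) (h : f =ᵐ[μ] g) {a : α}
    (ha : a ∈ μ.support) : f a = g a := by
  by_contra hne
  exact ((mem_support_iff_forall a).1 ha _ ((isOpen_ne_fun hf hg).mem_nhds hne)).ne'
    (ae_iff.1 h)

theorem mem_support_restrict_of_isOpen [μ.IsOpenPosMeasure] {s : Set α}
    (hs : IsOpen s) (hsm : MeasurableSet s) {a : α} (ha : a ∈ s) : a ∈ (μ.restrict s).support := by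
  refine (mem_support_iff_forall a).2 fun U hU => ?_
  rw [restrict_apply' hsm]
  exact measure_pos_of_mem_nhds μ (Filter.inter_mem hU (hs.mem_nhds ha))

theorem mk_mem_support_prod [TopologicalSpace β] [MeasurableSpace β] {ν : Measure β}
    [SFinite ν] {a : α} {b : β} (ha : a ∈ μ.support) (hb : b ∈ ν.support) :
    (a, b) ∈ (μ.prod ν).support := by
  refine (mem_support_iff_forall _).2 fun W hW => ?_
  obtain ⟨U, hU, V, hV, hUV⟩ := mem_nhds_prod_iff.1 hW
  calc 0 < μ U * ν V :=
        ENNReal.mul_pos ((mem_support_iff_forall a).1 ha U hU).ne'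
          ((mem_support_iff_forall b).1 hb V hV).ne'
    _ = μ.prod ν (U ×ˢ V) := (prod_prod U V).symm
    _ ≤ μ.prod ν W := measure_mono hUV

end MeasureTheory.Measure

theorem Bornology.IsBounded.isFiniteMeasure_restrict {α : Type*} [PseudoMetricSpace α]
    [ProperSpace α] [MeasurableSpace α] {μ : Measure α} [IsFiniteMeasureOnCompacts μ]
    {s : Set α} (hs : Bornology.IsBounded s) : IsFiniteMeasure (μ.restrict s) :=
  MeasureTheory.isFiniteMeasure_restrict.2 hs.measure_lt_top.ne

theorem isCompact_setOf_norm_eq_one {E : Type*} [NormedAddCommGroup E] [ProperSpace E] :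
    IsCompact {v : E | ‖v‖ = 1} := by
  simpa only [Metric.sphere, dist_zero_right] using isCompact_sphere (0 : E) 1

section Gradient

variable {F : Type*} [NormedAddCommGroup F] [InnerProductSpace ℝ F] [CompleteSpace F]
  {f g : F → ℝ} {f' g' x : F}

theorem HasGradientAt.sub (hf : HasGradientAt f f' x) (hg : HasGradientAt g g' x) :
    HasGradientAt (fun y => f y - g y) (f' - g') x := by
  rw [hasGradientAt_iff_hasFDerivAt, map_sub]
  exact hf.hasFDerivAt.sub hg.hasFDerivAt

theorem HasGradientAt.sq (hf : HasGradientAt f f' x) :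
    HasGradientAt (fun y => f y ^ 2) ((2 * f x) • f') x := by
  rw [hasGradientAt_iff_hasFDerivAt, map_smul]
  refine ((hasDerivAt_pow 2 (f x)).comp_hasFDerivAt x hf.hasFDerivAt).congr_fderiv ?_
  simp

end Gradient

theorem setIntegral_mul_inner_nonneg_of_eq_zero_of_inner_neg {E : Type*}
    [NormedAddCommGroup E] [InnerProductSpace ℝ E] [MeasurableSpace E] {μB : Measure E}
    {B : Set E} (hB : MeasurableSet B) {f : E → ℝ} {n : E → E} {Ω : E} (hf : 0 ≤ f)
    (hinflow : ∀ x ∈ B, ⟪n x, Ω⟫ < 0 → f x = 0) : 0 ≤ ∫ x in B, f x * ⟪Ω, n x⟫ ∂μB := by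
  refine setIntegral_nonneg hB fun x hx => ?_
  rcases lt_or_ge ⟪n x, Ω⟫ 0 with hin | hout
  · simp [hinflow x hx hin]
  · exact mul_nonneg (hf x) (real_inner_comm Ω (n x) ▸ hout)

noncomputable def energy (X : Set EucV) (σS : Measure EucV) (u : EucV → EucV → ℝ) : ℝ :=
  ∫ p, u p.1 p.2 ^ 2 ∂(volume.restrict X).prod σS

section PhaseSpace

variable {X : Set EucV} {σS : Measure EucV}

theorem ae_mem_prod_unitSphere (hX : MeasurableSet X) (hσsupp : σS {Ω : EucV | ‖Ω‖ = 1}ᶜ = 0) :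
    ∀ᵐ p ∂(volume.restrict X).prod σS, p ∈ X ×ˢ {Ω : EucV | ‖Ω‖ = 1} :=
  ae_mem_prod_of_ae_mem (ae_restrict_mem hX) (ae_iff.2 hσsupp)

variable [IsFiniteMeasure σS]

theorem Continuous.integrable_unitSphere (hσsupp : σS {Ω : EucV | ‖Ω‖ = 1}ᶜ = 0) {v : EucV → ℝ}
    (hv : Continuous v) : Integrable v σS :=
  hv.integrable_of_ae_mem_isCompact isCompact_setOf_norm_eq_one (ae_iff.2 hσsupp)

theorem Continuous.integrable_phaseSpace (hX : MeasurableSet X) (hXb : Bornology.IsBounded X)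
    (hσsupp : σS {Ω : EucV | ‖Ω‖ = 1}ᶜ = 0) {g : EucV × EucV → ℝ} (hg : Continuous g) :
    Integrable g ((volume.restrict X).prod σS) :=
  have := hXb.isFiniteMeasure_restrict (μ := volume)
  hg.integrable_of_ae_mem_isCompact (hXb.isCompact_closure.prod isCompact_setOf_norm_eq_one)
    ((ae_mem_prod_unitSphere hX hσsupp).mono fun _ hp => ⟨subset_closure hp.1, hp.2⟩)

theorem hasDerivAt_energy (hX : MeasurableSet X) (hXb : Bornology.IsBounded X)
    (hσsupp : σS {Ω : EucV | ‖Ω‖ = 1}ᶜ = 0) {e et : ℝ → EucV → EucV → ℝ}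
    (he : Continuous fun q : ℝ × EucV × EucV => e q.1 q.2.1 q.2.2)
    (het : Continuous fun q : ℝ × EucV × EucV => et q.1 q.2.1 q.2.2)
    (hderiv : ∀ t x Ω, HasDerivAt (e · x Ω) (et t x Ω) t) (t : ℝ) :
    HasDerivAt (fun s => energy X σS (e s))
      (∫ p, 2 * e t p.1 p.2 * et t p.1 p.2 ∂(volume.restrict X).prod σS) t :=
  have := hXb.isFiniteMeasure_restrict (μ := volume)
  hasDerivAt_integral_of_continuous_of_ae_mem_isCompact
    (F := fun s (p : EucV × EucV) => e s p.1 p.2 ^ 2)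
    (F' := fun s (p : EucV × EucV) => 2 * e s p.1 p.2 * et s p.1 p.2) (by fun_prop) (by fun_prop)
    (fun s p => by simpa using (hderiv s p.1 p.2).fun_pow 2)
    (hXb.isCompact_closure.prod isCompact_setOf_norm_eq_one)
    ((ae_mem_prod_unitSphere hX hσsupp).mono fun _ hp => ⟨subset_closure hp.1, hp.2⟩) t

theorem integral_mul_angularAverage_le (hσsupp : σS {Ω : EucV | ‖Ω‖ = 1}ᶜ = 0) {v : EucV → ℝ}
    (hv : Continuous v) :
    ∫ Ω, v Ω * (1 / (4 * π) * ∫ Ω', v Ω' ∂σS) ∂σS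
      ≤ σS.real univ / (4 * π) * ∫ Ω, v Ω ^ 2 ∂σS := by
  have hCS := sq_integral_le_measureReal_univ_mul_integral_sq (hv.integrable_unitSphere hσsupp)
    ((hv.pow 2).integrable_unitSphere hσsupp)
  rw [integral_mul_const]
  calc (∫ Ω, v Ω ∂σS) * (1 / (4 * π) * ∫ Ω, v Ω ∂σS)
      = 1 / (4 * π) * (∫ Ω, v Ω ∂σS) ^ 2 := by ring
    _ ≤ 1 / (4 * π) * (σS.real univ * ∫ Ω, v Ω ^ 2 ∂σS) := by gcongr
    _ = σS.real univ / (4 * π) * ∫ Ω, v Ω ^ 2 ∂σS := by ring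

theorem eq_zero_of_energy_eq_zero (hX : MeasurableSet X) (hXopen : IsOpen X)
    (hXb : Bornology.IsBounded X) (hσsupp : σS {Ω : EucV | ‖Ω‖ = 1}ᶜ = 0)
    (hσfull : ∀ O : Set EucV, IsOpen O → (O ∩ {Ω : EucV | ‖Ω‖ = 1}).Nonempty → 0 < σS O)
    {u : EucV → EucV → ℝ} (hu : Continuous fun p : EucV × EucV => u p.1 p.2)
    (h : energy X σS u = 0) : ∀ x ∈ closure X, ∀ Ω : EucV, ‖Ω‖ = 1 → u x Ω = 0 := by
  have hae : (fun p : EucV × EucV => u p.1 p.2 ^ 2) =ᵐ[(volume.restrict X).prod σS] 0 :=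
    (integral_eq_zero_iff_of_nonneg (fun _ => sq_nonneg _)
      ((hu.pow 2).integrable_phaseSpace hX hXb hσsupp)).1 h
  have hsupp : ∀ Ω : EucV, ‖Ω‖ = 1 → Ω ∈ σS.support := fun Ω hΩ =>
    (Measure.mem_support_iff_forall Ω).2 fun U hU =>
      (hσfull _ isOpen_interior ⟨Ω, mem_interior_iff_mem_nhds.2 hU, hΩ⟩).trans_le
        (measure_mono interior_subset)
  have hvanish : ∀ x ∈ X, ∀ Ω : EucV, ‖Ω‖ = 1 → u x Ω = 0 := fun x hx Ω hΩ =>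
    pow_eq_zero_iff two_ne_zero |>.1 <|
      Measure.apply_eq_of_ae_eq_of_mem_support (hu.pow 2) continuous_const hae
        (Measure.mk_mem_support_prod
          (Measure.mem_support_restrict_of_isOpen hXopen hX hx) (hsupp Ω hΩ))
  intro x hx Ω hΩ
  exact closure_minimal (fun y hy => hvanish y hy Ω hΩ)
    (isClosed_eq (by fun_prop) continuous_const) hx

theorem integral_mul_deriv_le_energy (hX : MeasurableSet X) (hXb : Bornology.IsBounded X)
    {B : Set EucV} (hB : MeasurableSet B) {μB : Measure EucV} {n : EucV → EucV}
    (hdiv : ∀ (Ω : EucV) (f : EucV → ℝ) (fgrad : EucV → EucV),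
      ContinuousOn f (closure X) →
      (∀ x ∈ X, HasGradientAt f (fgrad x) x) →
      ContinuousOn fgrad (closure X) →
      ∫ x in X, ⟪Ω, fgrad x⟫ = ∫ x in B, f x * ⟪Ω, n x⟫ ∂μB)
    (hσsupp : σS {Ω : EucV | ‖Ω‖ = 1}ᶜ = 0) {σs σt : ℝ} (hσs : 0 ≤ σs) (hσt : 0 ≤ σt)
    {u ut : EucV → EucV → ℝ} {ug : EucV → EucV → EucV}
    (hu : Continuous fun p : EucV × EucV => u p.1 p.2)
    (hug : Continuous fun p : EucV × EucV => ug p.1 p.2)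
    (hgrad : ∀ x Ω, HasGradientAt (u · Ω) (ug x Ω) x)
    (hpde : ∀ x ∈ X, ∀ Ω : EucV, ‖Ω‖ = 1 →
      ut x Ω + ⟪Ω, ug x Ω⟫ = σs * ((1 / (4 * π)) * ∫ Ω', u x Ω' ∂σS) - σt * u x Ω)
    (hinflow : ∀ x ∈ B, ∀ Ω : EucV, ‖Ω‖ = 1 → ⟪n x, Ω⟫ < 0 → u x Ω = 0) :
    ∫ p, 2 * u p.1 p.2 * ut p.1 p.2 ∂(volume.restrict X).prod σS
      ≤ σs * σS.real univ / (2 * π) * energy X σS u := by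
  have := hXb.isFiniteMeasure_restrict (μ := volume)
  have hσ : ∀ᵐ Ω ∂σS, ‖Ω‖ = 1 := ae_iff.2 hσsupp
  set c : EucV → ℝ := fun x => (1 / (4 * π)) * ∫ Ω', u x Ω' ∂σS
  have hc : Continuous c := continuous_const.mul
    (continuous_integral_of_ae_mem_isCompact hu isCompact_setOf_norm_eq_one hσ)
  have hint : ∀ g : EucV × EucV → ℝ, Continuous g → Integrable g ((volume.restrict X).prod σS) :=
    fun _ hg => hg.integrable_phaseSpace hX hXb hσsupp
  have hsplit : ∫ p, 2 * u p.1 p.2 * ut p.1 p.2 ∂(volume.restrict X).prod σS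
      = 2 * σs * ∫ p, u p.1 p.2 * c p.1 ∂(volume.restrict X).prod σS
        - ∫ p, ⟪p.2, (2 * u p.1 p.2) • ug p.1 p.2⟫ ∂(volume.restrict X).prod σS
        - 2 * σt * energy X σS u := by
    rw [energy, ← integral_const_mul, ← integral_const_mul,
      ← integral_sub (hint _ (by fun_prop)) (hint _ (by fun_prop)),
      ← integral_sub (hint _ (by fun_prop)) (hint _ (by fun_prop))]
    refine integral_congr_ae ((ae_mem_prod_unitSphere hX hσsupp).mono fun p hp => ?_)
    simp only [real_inner_smul_right]
    linear_combination (2 * u p.1 p.2) * hpde p.1 hp.1 p.2 hp.2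
  have hflux : 0 ≤ ∫ p, ⟪p.2, (2 * u p.1 p.2) • ug p.1 p.2⟫ ∂(volume.restrict X).prod σS := by
    rw [integral_prod_symm _ (hint _ (by fun_prop))]
    refine integral_nonneg_of_ae (hσ.mono fun Ω hΩ => ?_)
    show 0 ≤ ∫ x in X, ⟪Ω, (2 * u x Ω) • ug x Ω⟫
    rw [hdiv Ω (fun x => u x Ω ^ 2) _ (by fun_prop) (fun x _ => (hgrad x Ω).sq) (by fun_prop)]
    exact setIntegral_mul_inner_nonneg_of_eq_zero_of_inner_neg hB (fun x => sq_nonneg _)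
      fun x hx hin => by simp [hinflow x hx Ω hΩ hin]
  have hscatter : ∫ p, u p.1 p.2 * c p.1 ∂(volume.restrict X).prod σS
      ≤ σS.real univ / (4 * π) * energy X σS u := by
    rw [energy, integral_prod _ (hint _ (by fun_prop)), integral_prod _ (hint _ (by fun_prop)),
      ← integral_const_mul]
    refine integral_mono (hint (fun p => u p.1 p.2 * c p.1) (by fun_prop)).integral_prod_left
      ((hint (fun p => u p.1 p.2 ^ 2) (by fun_prop)).integral_prod_left.const_mul _) fun x => ?_
    exact integral_mul_angularAverage_le hσsupp (by fun_prop)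
  have hE : 0 ≤ energy X σS u := integral_nonneg fun _ => sq_nonneg _
  calc _ = _ := hsplit
    _ ≤ 2 * σs * (σS.real univ / (4 * π) * energy X σS u) := by
      have := mul_le_mul_of_nonneg_left hscatter (by positivity : 0 ≤ 2 * σs)
      nlinarith [mul_nonneg hσt hE]
    _ = _ := by ring

end PhaseSpace

theorem transport_uniqueness_general
    (T : ℝ)
    (X : Set EucV) (hX : MeasurableSet X) (hXopen : IsOpen X)
    (hXb : Bornology.IsBounded X)
    (B : Set EucV) (hB : B = frontier X)
    (μB : Measure EucV)
    (n : EucV → EucV)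
    (hdiv : ∀ (Ω : EucV) (f : EucV → ℝ) (fgrad : EucV → EucV),
      ContinuousOn f (closure X) →
      (∀ x ∈ X, HasGradientAt f (fgrad x) x) →
      ContinuousOn fgrad (closure X) →
      ∫ x in X, ⟪Ω, fgrad x⟫ = ∫ x in B, f x * ⟪Ω, n x⟫ ∂μB)
    (σS : Measure EucV) [IsFiniteMeasure σS]
    (hσsupp : σS {Ω : EucV | ‖Ω‖ = 1}ᶜ = 0)
    -- the surface measure of S² charges every relatively open set of the sphere
    (hσfull : ∀ O : Set EucV, IsOpen O → (O ∩ {Ω : EucV | ‖Ω‖ = 1}).Nonempty → 0 < σS O)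
    (σs σt : ℝ) (hσs : 0 ≤ σs) (hσt : 0 ≤ σt)
    (Sop : (EucV → EucV → ℝ) → EucV → EucV → ℝ)
    (hSop : ∀ f x Ω, Sop f x Ω = (1 / (4 * π)) * ∫ Ω', f x Ω' ∂σS)
    (ψ₁ ψ₂ ψ₁t ψ₂t : ℝ → EucV → EucV → ℝ)
    (ψ₁grad ψ₂grad : ℝ → EucV → EucV → EucV)
    (hψ₁t : ∀ t x Ω, HasDerivAt (fun s => ψ₁ s x Ω) (ψ₁t t x Ω) t)
    (hψ₂t : ∀ t x Ω, HasDerivAt (fun s => ψ₂ s x Ω) (ψ₂t t x Ω) t)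
    (hψ₁grad : ∀ t x Ω, HasGradientAt (fun y => ψ₁ t y Ω) (ψ₁grad t x Ω) x)
    (hψ₂grad : ∀ t x Ω, HasGradientAt (fun y => ψ₂ t y Ω) (ψ₂grad t x Ω) x)
    (hcont₁ : Continuous (fun p : ℝ × EucV × EucV => ψ₁ p.1 p.2.1 p.2.2))
    (hcont₂ : Continuous (fun p : ℝ × EucV × EucV => ψ₂ p.1 p.2.1 p.2.2))
    (hcont₁t : Continuous (fun p : ℝ × EucV × EucV => ψ₁t p.1 p.2.1 p.2.2))
    (hcont₂t : Continuous (fun p : ℝ × EucV × EucV => ψ₂t p.1 p.2.1 p.2.2))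
    (hcont₁g : Continuous (fun p : ℝ × EucV × EucV => ψ₁grad p.1 p.2.1 p.2.2))
    (hcont₂g : Continuous (fun p : ℝ × EucV × EucV => ψ₂grad p.1 p.2.1 p.2.2))
    (hpde₁ : ∀ t ∈ Icc 0 T, ∀ x ∈ X, ∀ Ω : EucV, ‖Ω‖ = 1 →
      ψ₁t t x Ω + ⟪Ω, ψ₁grad t x Ω⟫ = σs * Sop (ψ₁ t) x Ω - σt * ψ₁ t x Ω)
    (hpde₂ : ∀ t ∈ Icc 0 T, ∀ x ∈ X, ∀ Ω : EucV, ‖Ω‖ = 1 →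
      ψ₂t t x Ω + ⟪Ω, ψ₂grad t x Ω⟫ = σs * Sop (ψ₂ t) x Ω - σt * ψ₂ t x Ω)
    (hic : ∀ x ∈ closure X, ∀ Ω : EucV, ‖Ω‖ = 1 → ψ₁ 0 x Ω = ψ₂ 0 x Ω)
    (hbc : ∀ t ∈ Icc 0 T, ∀ x ∈ B, ∀ Ω : EucV, ‖Ω‖ = 1 → ⟪n x, Ω⟫ < 0 →
      ψ₁ t x Ω = ψ₂ t x Ω) :
    ∀ t ∈ Icc 0 T, ∀ x ∈ closure X, ∀ Ω : EucV, ‖Ω‖ = 1 →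
      ψ₁ t x Ω = ψ₂ t x Ω := by
  set e : ℝ → EucV → EucV → ℝ := fun t x Ω => ψ₁ t x Ω - ψ₂ t x Ω
  have he : Continuous fun q : ℝ × EucV × EucV => e q.1 q.2.1 q.2.2 := hcont₁.sub hcont₂
  have hpde : ∀ t ∈ Icc 0 T, ∀ x ∈ X, ∀ Ω : EucV, ‖Ω‖ = 1 →
      (ψ₁t t x Ω - ψ₂t t x Ω) + ⟪Ω, ψ₁grad t x Ω - ψ₂grad t x Ω⟫
        = σs * ((1 / (4 * π)) * ∫ Ω', e t x Ω' ∂σS) - σt * e t x Ω := by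
    intro t ht x hx Ω hΩ
    have h₁ := hpde₁ t ht x hx Ω hΩ
    have h₂ := hpde₂ t ht x hx Ω hΩ
    rw [hSop] at h₁ h₂
    rw [integral_sub ((show Continuous (ψ₁ t x) by fun_prop).integrable_unitSphere hσsupp)
      ((show Continuous (ψ₂ t x) by fun_prop).integrable_unitSphere hσsupp), inner_sub_right]
    linear_combination h₁ - h₂
  have hBm : MeasurableSet B := hB ▸ isClosed_frontier.measurableSet
  have hE₀ : energy X σS (e 0) = 0 :=
    integral_eq_zero_of_ae ((ae_mem_prod_unitSphere hX hσsupp).mono fun p hp => by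
      simp [e, hic p.1 (subset_closure hp.1) p.2 hp.2])
  have hE : ∀ t ∈ Icc 0 T, energy X σS (e t) = 0 :=
    eq_zero_of_hasDerivAt_le_mul_of_nonneg
      (fun t _ => hasDerivAt_energy hX hXb hσsupp he (hcont₁t.sub hcont₂t)
        (fun t x Ω => (hψ₁t t x Ω).sub (hψ₂t t x Ω)) t)
      (fun t ht => integral_mul_deriv_le_energy hX hXb hBm hdiv hσsupp hσs hσt
        (by fun_prop) (by fun_prop) (fun x Ω => (hψ₁grad t x Ω).sub (hψ₂grad t x Ω))
        (hpde t (Ico_subset_Icc_self ht))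
        fun x hx Ω hΩ hin => sub_eq_zero.2 (hbc t (Ico_subset_Icc_self ht) x hx Ω hΩ hin))
      hE₀ fun t _ => integral_nonneg fun _ => sq_nonneg _
  intro t ht x hx Ω hΩ
  exact sub_eq_zero.1
    (eq_zero_of_energy_eq_zero hX hXopen hXb hσsupp hσfull (by fun_prop) (hE t ht) x hx Ω hΩ)

/-- Uniqueness of C¹ solutions of the initial–inflow-boundary
value problem for `∂_t ψ + Ω·∇_x ψ = σ_s Sψ − σ_t ψ` on a bounded C¹ domain
`X ⊂ ℝ³` (C¹ regularity encoded by the Gauss–Green identity `hdiv`): two C¹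
solutions with the same initial data and the same inflow boundary data on `γ₋`
coincide. -/
theorem transport_uniqueness
    (T : ℝ) (hT : 0 < T)
    (X : Set EucV) (hX : MeasurableSet X) (hXopen : IsOpen X)
    (hXb : Bornology.IsBounded X) (hXne : X.Nonempty)
    (B : Set EucV) (hB : B = frontier X)
    (μB : Measure EucV) [IsFiniteMeasure μB] (hμB : μB Bᶜ = 0)
    (n : EucV → EucV) (hn : ∀ x ∈ B, ‖n x‖ = 1)
    (hdiv : ∀ (Ω : EucV) (f : EucV → ℝ) (fgrad : EucV → EucV),
      ContinuousOn f (closure X) →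
      (∀ x ∈ X, HasGradientAt f (fgrad x) x) →
      ContinuousOn fgrad (closure X) →
      ∫ x in X, ⟪Ω, fgrad x⟫ = ∫ x in B, f x * ⟪Ω, n x⟫ ∂μB)
    (σS : Measure EucV) [IsFiniteMeasure σS]
    (hσsupp : σS {Ω : EucV | ‖Ω‖ = 1}ᶜ = 0)
    -- the surface measure of S² charges every relatively open set of the sphere
    (hσfull : ∀ O : Set EucV, IsOpen O → (O ∩ {Ω : EucV | ‖Ω‖ = 1}).Nonempty → 0 < σS O)
    (σs σt : ℝ) (hσs : 0 ≤ σs) (hσt : 0 ≤ σt)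
    (Sop : (EucV → EucV → ℝ) → EucV → EucV → ℝ)
    (hSop : ∀ f x Ω, Sop f x Ω = (1 / (4 * π)) * ∫ Ω', f x Ω' ∂σS)
    (ψ₁ ψ₂ ψ₁t ψ₂t : ℝ → EucV → EucV → ℝ)
    (ψ₁grad ψ₂grad : ℝ → EucV → EucV → EucV)
    (hψ₁t : ∀ t x Ω, HasDerivAt (fun s => ψ₁ s x Ω) (ψ₁t t x Ω) t)
    (hψ₂t : ∀ t x Ω, HasDerivAt (fun s => ψ₂ s x Ω) (ψ₂t t x Ω) t)
    (hψ₁grad : ∀ t x Ω, HasGradientAt (fun y => ψ₁ t y Ω) (ψ₁grad t x Ω) x)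
    (hψ₂grad : ∀ t x Ω, HasGradientAt (fun y => ψ₂ t y Ω) (ψ₂grad t x Ω) x)
    (hcont₁ : Continuous (fun p : ℝ × EucV × EucV => ψ₁ p.1 p.2.1 p.2.2))
    (hcont₂ : Continuous (fun p : ℝ × EucV × EucV => ψ₂ p.1 p.2.1 p.2.2))
    (hcont₁t : Continuous (fun p : ℝ × EucV × EucV => ψ₁t p.1 p.2.1 p.2.2))
    (hcont₂t : Continuous (fun p : ℝ × EucV × EucV => ψ₂t p.1 p.2.1 p.2.2))
    (hcont₁g : Continuous (fun p : ℝ × EucV × EucV => ψ₁grad p.1 p.2.1 p.2.2))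
    (hcont₂g : Continuous (fun p : ℝ × EucV × EucV => ψ₂grad p.1 p.2.1 p.2.2))
    (hpde₁ : ∀ t ∈ Icc 0 T, ∀ x ∈ X, ∀ Ω : EucV, ‖Ω‖ = 1 →
      ψ₁t t x Ω + ⟪Ω, ψ₁grad t x Ω⟫ = σs * Sop (ψ₁ t) x Ω - σt * ψ₁ t x Ω)
    (hpde₂ : ∀ t ∈ Icc 0 T, ∀ x ∈ X, ∀ Ω : EucV, ‖Ω‖ = 1 →
      ψ₂t t x Ω + ⟪Ω, ψ₂grad t x Ω⟫ = σs * Sop (ψ₂ t) x Ω - σt * ψ₂ t x Ω)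
    (hic : ∀ x ∈ closure X, ∀ Ω : EucV, ‖Ω‖ = 1 → ψ₁ 0 x Ω = ψ₂ 0 x Ω)
    (hbc : ∀ t ∈ Icc 0 T, ∀ x ∈ B, ∀ Ω : EucV, ‖Ω‖ = 1 → ⟪n x, Ω⟫ < 0 →
      ψ₁ t x Ω = ψ₂ t x Ω) :
    ∀ t ∈ Icc 0 T, ∀ x ∈ closure X, ∀ Ω : EucV, ‖Ω‖ = 1 →
      ψ₁ t x Ω = ψ₂ t x Ω :=
  transport_uniqueness_general T X hX hXopen hXb B hB μB n hdiv σS hσsupp hσfull σs σt hσs hσt Sop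
    hSop ψ₁ ψ₂ ψ₁t ψ₂t ψ₁grad ψ₂grad hψ₁t hψ₂t hψ₁grad hψ₂grad hcont₁ hcont₂ hcont₁t hcont₂t hcont₁g
    hcont₂g hpde₁ hpde₂ hic hbc
end
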